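/- If an infinite word u satisfies property R_m, then u is uniformly recurrent and exactly m distinct letters occur in u. -/
import Mathlib


variable {A : Type*}

/-- The factor of `u` of length `n` starting at position `j`. -/
def factorAt (u : ℕ → A) (j n : ℕ) : List A :=
  (List.range n).map (fun i => u (j + i))

/-- `j` is an occurrence of the finite word `w` in `u`. -/
def OccursAt (u : ℕ → A) (w : List A) (j : ℕ) : Prop :=
  factorAt u j w.length = w

/-- `w` is a factor of the infinite word `u`. -/
def IsFactor (u : ℕ → A) (w : List A) : Prop :=
  ∃ j, OccursAt u w j

/-- `v` is a return word of `w` in `u`: the word between two successive occurrences of `w`. -/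
def IsReturnWord (u : ℕ → A) (w v : List A) : Prop :=
  ∃ j k, j < k ∧ OccursAt u w j ∧ OccursAt u w k ∧
    (∀ l, j < l → l < k → ¬ OccursAt u w l) ∧ v = factorAt u j (k - j)

/-- The set `R(w)` of return words of `w` in `u`. -/
def returnWords (u : ℕ → A) (w : List A) : Set (List A) :=
  {v | IsReturnWord u w v}

/-- Property `R_m`: every factor of `u` has exactly `m` return words. -/
def PropertyR (u : ℕ → A) (m : ℕ) : Prop :=
  ∀ w, IsFactor u w → (returnWords u w).Finite ∧ (returnWords u w).ncard = m

/-- The set of left extensions of `w`. -/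
def leftExt (u : ℕ → A) (w : List A) : Set A := {a | IsFactor u (a :: w)}

/-- The set of right extensions of `w`. -/
def rightExt (u : ℕ → A) (w : List A) : Set A := {b | IsFactor u (w ++ [b])}

def LeftSpecial (u : ℕ → A) (w : List A) : Prop := 2 ≤ (leftExt u w).ncard

def RightSpecial (u : ℕ → A) (w : List A) : Prop := 2 ≤ (rightExt u w).ncard

/-- The set of pairs `(a, b)` such that `a w b` is a factor of `u`. -/
def extPairs (u : ℕ → A) (w : List A) : Set (A × A) :=
  {p | IsFactor u (p.1 :: (w ++ [p.2]))}

/-- The bilateral order `B(w)`. -/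
noncomputable def bilateralOrder (u : ℕ → A) (w : List A) : ℤ :=
  ((extPairs u w).ncard : ℤ) - (leftExt u w).ncard - (rightExt u w).ncard + 1

/-- `w` is a weak bispecial factor of `u`. -/
def WeakBispecial (u : ℕ → A) (w : List A) : Prop :=
  IsFactor u w ∧ bilateralOrder u w < 0

/-- The factor complexity of `u`. -/
noncomputable def Complexity (u : ℕ → A) (n : ℕ) : ℕ :=
  {w : List A | w.length = n ∧ IsFactor u w}.ncard

/-- `u` is recurrent: every factor occurs at least twice. -/
def Recurrent (u : ℕ → A) : Prop :=
  ∀ w, IsFactor u w → ∃ j k, j < k ∧ OccursAt u w j ∧ OccursAt u w k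

/-- `u` is uniformly recurrent. -/
def UniformlyRecurrent (u : ℕ → A) : Prop :=
  ∀ n : ℕ, ∃ N : ℕ, ∀ w, IsFactor u w → w.length = N →
    ∀ v, IsFactor u v → v.length = n → v <:+: w

def EventuallyPeriodic (u : ℕ → A) : Prop :=
  ∃ p, 0 < p ∧ ∃ N, ∀ n, N ≤ n → u (n + p) = u n

/-- `w` is a maximal right special factor. -/
def MaximalRightSpecial (u : ℕ → A) (w : List A) : Prop :=
  IsFactor u w ∧ RightSpecial u w ∧
    ∀ v, IsFactor u v → RightSpecial u v → w <:+ v → v = w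

/-- The return word `v` of `w` starts with the letter `b`. -/
def StartsWithLetter (w v : List A) (b : A) : Prop := (w ++ [b]) <+: (v ++ w)

section Aux

variable {A : Type*}

lemma factorAt_len (u : ℕ → A) (j n : ℕ) : (factorAt u j n).length = n := by
  simp [factorAt]

lemma occursAt_factorAt (u : ℕ → A) (j n : ℕ) : OccursAt u (factorAt u j n) j := by
  simp [OccursAt, factorAt_len]

lemma factorAt_append (u : ℕ → A) (j a b : ℕ) :
    factorAt u j (a + b) = factorAt u j a ++ factorAt u (j + a) b := by
  simp only [factorAt, List.range_add, List.map_append, List.map_map]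
  congr 1
  apply List.map_congr_left
  intro i _
  simp [Function.comp, Nat.add_assoc]

lemma occursAt_shift (u : ℕ → A) (a n j k : ℕ)
    (hh : OccursAt u (factorAt u j (a + n)) k) :
    OccursAt u (factorAt u (j + a) n) (k + a) := by
  unfold OccursAt at *
  rw [factorAt_len] at *
  rw [factorAt_append, factorAt_append] at hh
  exact (List.append_inj hh (by rw [factorAt_len, factorAt_len])).2

lemma factorAt_infix (u : ℕ → A) (p k n N : ℕ) (h1 : p ≤ k) (h2 : k + n ≤ p + N) :
    factorAt u k n <:+: factorAt u p N := by
  have hN : N = (k - p) + (n + (p + N - (k + n))) := by omega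
  rw [hN, factorAt_append, factorAt_append]
  have hpk : p + (k - p) = k := by omega
  rw [hpk]
  exact ⟨factorAt u p (k - p), factorAt u (k + n) (p + N - (k + n)), by simp⟩

end Aux

/-- If `u` satisfies property `R_m`, then `u` is uniformly recurrent and
exactly `m` distinct letters occur in `u`. -/
theorem propertyR_uniformlyRecurrent_card_letters [Fintype A] (u : ℕ → A) (m : ℕ)
    (h : PropertyR u m) :
    UniformlyRecurrent u ∧ (Set.range u).ncard = m := by
  classical
  have hocc_nil : ∀ j, OccursAt u [] j := fun j => by simp [OccursAt, factorAt]
  have hfac_nil : IsFactor u ([] : List A) := ⟨0, hocc_nil 0⟩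
  have hret_nil : returnWords u ([] : List A) = (fun a => [a]) '' Set.range u := by
    ext v
    constructor
    · rintro ⟨j, k, hjk, -, -, hno, rfl⟩
      have hk : k = j + 1 := by
        by_contra hne
        exact hno (j + 1) (by omega) (by omega) (hocc_nil _)
      subst hk
      exact ⟨u j, ⟨j, rfl⟩, by simp [factorAt, List.range_succ]⟩
    · rintro ⟨a, ⟨j, rfl⟩, rfl⟩
      exact ⟨j, j + 1, by omega, hocc_nil j, hocc_nil _,
        fun l h1 h2 => absurd (h1.trans h2) (by omega), by simp [factorAt, List.range_succ]⟩
  have hcard : (Set.range u).ncard = m := by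
    have h0 := h [] hfac_nil
    rw [hret_nil] at h0
    rw [← h0.2, Set.ncard_image_of_injective _ (fun a b hab => by simpa using hab)]
  have hm : 1 ≤ m := by
    have h0 := h [] hfac_nil
    have hne : (returnWords u ([] : List A)).Nonempty := by
      rw [hret_nil]; exact ⟨[u 0], u 0, ⟨0, rfl⟩, rfl⟩
    have := (Set.ncard_pos h0.1).mpr hne
    omega
  have hnext : ∀ w j, OccursAt u w j → ∃ k, j < k ∧ OccursAt u w k := by
    intro w j hj
    have h0 := h (factorAt u 0 (j + w.length)) ⟨0, occursAt_factorAt u 0 _⟩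
    obtain ⟨v, hv⟩ : (returnWords u (factorAt u 0 (j + w.length))).Nonempty :=
      Set.nonempty_of_ncard_ne_zero (by rw [h0.2]; omega)
    obtain ⟨a, b, hab, -, hb, -, -⟩ := hv
    have hb' := occursAt_shift u j w.length 0 b hb
    rw [Nat.zero_add] at hb'
    rw [hj] at hb'
    exact ⟨b + j, by omega, hb'⟩
  have hinf : ∀ w, IsFactor u w → ∀ B, ∃ k, B ≤ k ∧ OccursAt u w k := by
    rintro w ⟨j, hj⟩ B
    induction B with
    | zero => exact ⟨j, Nat.zero_le _, hj⟩
    | succ B ih =>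
      obtain ⟨k, hk1, hk2⟩ := ih
      obtain ⟨k', h1, h2⟩ := hnext w k hk2
      exact ⟨k', by omega, h2⟩
  have hwind : ∀ w, IsFactor u w →
      ∃ K, ∀ p, ∃ k, p ≤ k ∧ k + w.length ≤ p + K ∧ OccursAt u w k := by
    rintro w ⟨j0, hj0⟩
    obtain ⟨K, hK⟩ : ∃ K, ∀ v ∈ returnWords u w, v.length ≤ K := by
      obtain ⟨K, hK⟩ := ((h w ⟨j0, hj0⟩).1.image List.length).bddAbove
      exact ⟨K, fun v hv => hK ⟨v, hv, rfl⟩⟩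
    refine ⟨j0 + K + w.length, fun p => ?_⟩
    have hex : ∃ k, p ≤ k ∧ OccursAt u w k := hinf w ⟨j0, hj0⟩ p
    obtain ⟨hpk, hk⟩ := Nat.find_spec hex
    set k := Nat.find hex with hkdef
    refine ⟨k, hpk, ?_, hk⟩
    by_cases hc : j0 < k
    · set j := Nat.findGreatest (OccursAt u w) (k - 1) with hjdef
      have hj : OccursAt u w j := Nat.findGreatest_spec (show j0 ≤ k - 1 by omega) hj0
      have hjle : j ≤ k - 1 := Nat.findGreatest_le _
      have hjp : j < p := by
        by_contra hge
        exact Nat.find_min hex (show j < k by omega) ⟨by omega, hj⟩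
      have hret : factorAt u j (k - j) ∈ returnWords u w :=
        ⟨j, k, by omega, hj, hk, fun l h1 h2 =>
          Nat.findGreatest_is_greatest h1 (by omega), rfl⟩
      have := hK _ hret
      rw [factorAt_len] at this
      omega
    · omega
  refine ⟨?_, hcard⟩
  intro n
  set F := {v : List A | v.length = n ∧ IsFactor u v} with hFdef
  have hFfin : F.Finite := Set.Finite.subset (List.finite_length_eq A n) fun v hv => hv.1
  have hchoice : ∀ v ∈ F, ∃ K, ∀ p, ∃ k, p ≤ k ∧ k + v.length ≤ p + K ∧ OccursAt u v k :=
    fun v hv => hwind v hv.2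
  choose! Kf hKf using hchoice
  obtain ⟨T, hT⟩ : ∃ T, ∀ v ∈ F, Kf v ≤ T := by
    obtain ⟨T, hT⟩ := (hFfin.image Kf).bddAbove
    exact ⟨T, fun v hv => hT ⟨v, hv, rfl⟩⟩
  refine ⟨n + T, ?_⟩
  intro w hw hwlen v hv hvlen
  obtain ⟨p, hp⟩ := hw
  have hvF : v ∈ F := ⟨hvlen, hv⟩
  obtain ⟨k, hk1, hk2, hk3⟩ := hKf v hvF p
  have hveq : v = factorAt u k n := by rw [← hvlen]; exact hk3.symm
  have hweq : w = factorAt u p (n + T) := by rw [← hwlen]; exact hp.symm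
  rw [hveq, hweq]
  exact factorAt_infix u p k n (n + T) hk1 (by have := hT v hvF; omega)
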